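/- For σ_n = 1 - (3n² - 3n + 2)/(n(n-1)²(n+2)) and μ_n = 2/((n-1)²(n+2)), define for λ ∈ (0,1) the function f(n, λ) = (λμ_n + (1-λ)μ_{n+1}) / (1 - λσ_n - (1-λ)σ_{n+1})^{3/2}. Then for every integer n ≥ 5 and every λ ∈ [0,1], f(n, λ) ≤ (2/3^{3/2}) · n^{1/2}(n+1)^{3/2} / (n² + 1). -/

import Mathlib

noncomputable def σHB (n : ℕ) : ℝ :=
  1 - (3 * (n:ℝ)^2 - 3 * n + 2) / ((n:ℝ) * ((n:ℝ) - 1)^2 * ((n:ℝ) + 2))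

noncomputable def μHB (n : ℕ) : ℝ := 2 / (((n:ℝ) - 1)^2 * ((n:ℝ) + 2))

noncomputable def fB (n : ℕ) (lam : ℝ) : ℝ :=
  (lam * μHB n + (1 - lam) * μHB (n + 1)) /
    (1 - lam * σHB n - (1 - lam) * σHB (n + 1)) ^ ((3/2 : ℝ))

/-!
Both points `(1 - σ_n, μ_n)` and `(1 - σ_{n+1}, μ_{n+1})` lie on the line
`n (n² + 1) μ = n (n + 1) x - 1`, so along the chord `f = (m x - 1) / (n (n² + 1) x^{3/2})`
with `m = n (n + 1)` and `x = 1 - λσ_n - (1 - λ)σ_{n+1} > 0`.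
By AM-GM, `m x - 1 ≤ (2 / 3^{3/2}) (m x)^{3/2}` (equality at `m x = 3`),
and `m^{3/2} / n = n^{1/2} (n + 1)^{3/2}`.
-/

open Real

lemma three_mul_mul_sq_le {s c : ℝ} (hs : 0 ≤ s) (hc : 0 ≤ c) :
    3 * c * s ^ 2 ≤ 2 * s ^ 3 + c ^ 3 := by
  nlinarith [mul_nonneg (sq_nonneg (s - c)) (by positivity : 0 ≤ 2 * s + c)]

lemma rpow_three_halves_eq {x : ℝ} (hx : 0 ≤ x) : x ^ (3 / 2 : ℝ) = √x ^ 3 := by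
  rw [sqrt_eq_rpow, ← rpow_natCast, ← rpow_mul hx]
  norm_num

lemma sub_one_le_rpow_three_halves {u : ℝ} (hu : 0 ≤ u) :
    u - 1 ≤ 2 / 3 ^ (3 / 2 : ℝ) * u ^ (3 / 2 : ℝ) := by
  rw [rpow_three_halves_eq hu, rpow_three_halves_eq (by norm_num : (0:ℝ) ≤ 3),
    div_mul_eq_mul_div, le_div_iff₀ (by positivity)]
  have h33 : √3 ^ 3 = 3 * √3 := by rw [pow_succ, sq_sqrt (by norm_num)]
  have := three_mul_mul_sq_le (sqrt_nonneg u) (sqrt_nonneg 3)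
  rw [sq_sqrt hu, h33] at this
  rw [h33]
  linarith

lemma mul_sub_one_div_rpow_le {m x : ℝ} (hm : 0 ≤ m) (hx : 0 < x) :
    (m * x - 1) / x ^ (3 / 2 : ℝ) ≤ 2 / 3 ^ (3 / 2 : ℝ) * m ^ (3 / 2 : ℝ) := by
  rw [div_le_iff₀ (by positivity), mul_assoc, ← mul_rpow hm hx.le]
  exact sub_one_le_rpow_three_halves (by positivity)

lemma one_sub_σHB_pos {k : ℕ} (hk : 2 ≤ k) : 0 < 1 - σHB k := by
  have hk' : (2:ℝ) ≤ k := by exact_mod_cast hk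
  rw [σHB, sub_sub_cancel]
  have hk1 : (0:ℝ) < k - 1 := by linarith
  apply div_pos <;> nlinarith [mul_pos hk1 hk1]

lemma mul_μHB_eq {n : ℕ} (hn : 2 ≤ n) :
    n * (n ^ 2 + 1) * μHB n = n * (n + 1) * (1 - σHB n) - 1 := by
  have hn' : (2:ℝ) ≤ n := by exact_mod_cast hn
  have h0 : (n:ℝ) ≠ 0 := by positivity
  have h1 : (n:ℝ) - 1 ≠ 0 := by linarith
  have h2 : (n:ℝ) + 2 ≠ 0 := by linarith
  rw [μHB, σHB]
  field_simp
  ring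

lemma mul_μHB_succ_eq {n : ℕ} (hn : 1 ≤ n) :
    n * (n ^ 2 + 1) * μHB (n + 1) = n * (n + 1) * (1 - σHB (n + 1)) - 1 := by
  have h0 : (n:ℝ) ≠ 0 := by positivity
  have h3 : (n:ℝ) + 3 ≠ 0 := by positivity
  rw [μHB, σHB]
  push_cast
  rw [add_sub_cancel_right]
  field_simp
  ring

theorem f_bound (n : ℕ) (hn : 5 ≤ n) (lam : ℝ) (hlam0 : 0 ≤ lam) (hlam1 : lam ≤ 1) :
    fB n lam ≤ (2 / 3 ^ ((3/2 : ℝ))) *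
      ((n:ℝ) ^ ((1/2 : ℝ)) * ((n:ℝ) + 1) ^ ((3/2 : ℝ)) / ((n:ℝ)^2 + 1)) := by
  set x := 1 - lam * σHB n - (1 - lam) * σHB (n + 1) with hx_def
  have hx : 0 < x := by
    have hσ := one_sub_σHB_pos (k := n) (by omega)
    have hσ' := one_sub_σHB_pos (k := n + 1) (by omega)
    have hcomb : x = lam * (1 - σHB n) + (1 - lam) * (1 - σHB (n + 1)) := by ring
    rcases hlam1.lt_or_eq with hlt | rfl
    · linarith [mul_nonneg hlam0 hσ.le, mul_pos (sub_pos.2 hlt) hσ']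
    · simpa [hcomb] using hσ
  have hN : (0:ℝ) < n := by positivity
  have hchord : lam * μHB n + (1 - lam) * μHB (n + 1) =
      (n * (n + 1) * x - 1) / (n * (n ^ 2 + 1)) := by
    rw [eq_div_iff (by positivity), hx_def]
    linear_combination lam * mul_μHB_eq (by omega : 2 ≤ n)
      + (1 - lam) * mul_μHB_succ_eq (by omega : 1 ≤ n)
  have hpow : ((n:ℝ) * (n + 1)) ^ (3 / 2 : ℝ) / n =
      (n:ℝ) ^ (1 / 2 : ℝ) * (n + 1) ^ (3 / 2 : ℝ) := by
    rw [mul_rpow hN.le (by positivity), mul_div_right_comm, ← rpow_sub_one hN.ne']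
    norm_num
  calc fB n lam = (n * (n + 1) * x - 1) / x ^ (3 / 2 : ℝ) / (n * (n ^ 2 + 1)) := by
        rw [fB, hchord, div_right_comm]
    _ ≤ 2 / 3 ^ (3 / 2 : ℝ) * ((n:ℝ) * (n + 1)) ^ (3 / 2 : ℝ) / (n * (n ^ 2 + 1)) :=
        div_le_div_of_nonneg_right (mul_sub_one_div_rpow_le (by positivity) hx) (by positivity)
    _ = _ := by rw [← hpow, div_div, mul_div_assoc]
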